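/- Let Γ be a countable residually finite discrete group and (Γ_n, n ≥ 1) a sequence of finite-index normal subgroups with lim Γ_n = {1}. Then for every f ∈ ℓ¹(Γ,ℂ) and every complex polynomial Q, the normalized traces converge: ⟨Q(ρ_f) δ₁, δ₁⟩ = lim_{n→∞} ⟨Q(ρ_{f^{(n)}}) δ_{1̄}, δ_{1̄}⟩, where δ₁ and δ_{1̄} denote the indicator functions of the identity in ℓ²(Γ,ℂ) and ℓ²(Γ/Γ_n,ℂ) respectively. -/

import Mathlib

open scoped BigOperators symmDiff Pointwise

noncomputable section

/-- The additive circle `𝕋 = ℝ/ℤ`. -/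
abbrev Torus : Type := AddCircle (1 : ℝ)

section GroupDefs

variable {Γ : Type*} [Group Γ]

/-- For `f ∈ ℤΓ`, the map `ρ_f : 𝕋^Γ → 𝕋^Γ`, `(ρ_f x)_{γ'} = Σ_γ f_γ • x_{γ'γ}`. -/
def rhoT (f : Γ →₀ ℤ) (x : Γ → Torus) : Γ → Torus :=
  fun γ' => f.sum fun γ c => c • x (γ' * γ)

/-- The compact abelian group `X_f = ker ρ_f ⊆ 𝕋^Γ` (as a subset). -/
def XSet (f : Γ →₀ ℤ) : Set (Γ → Torus) := {x | rhoT f x = 0}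

/-- The left shift `(λ^γ x)_{γ'} = x_{γ⁻¹ γ'}` on `𝕋^Γ`; restricted to `X_f` this is `α_f^γ`. -/
def lsh (γ : Γ) (x : Γ → Torus) : Γ → Torus := fun γ' => x (γ⁻¹ * γ')

/-- The left shift `(λ^γ w)_{γ'} = w_{γ⁻¹ γ'}` on real-valued functions. -/
def lshR (γ : Γ) (w : Γ → ℝ) : Γ → ℝ := fun γ' => w (γ⁻¹ * γ')

/-- Expansiveness of the `Γ`-action `α_f` on `X_f`: there is an open neighbourhood `U`
of `0` such that the only point of `X_f` all of whose translates stay in `U` is `0`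
(equivalently, `⋂_γ α_f^γ (U ∩ X_f) = {0}`). -/
def ExpansiveAction (f : Γ →₀ ℤ) : Prop :=
  ∃ U : Set (Γ → Torus), IsOpen U ∧ {x | x ∈ XSet f ∧ ∀ γ : Γ, lsh γ x ∈ U} = {0}

/-- `w ∈ ℓ∞(Γ)`: boundedness of a real-valued function. -/
def Bdd (w : Γ → ℝ) : Prop := ∃ C : ℝ, ∀ γ : Γ, |w γ| ≤ C

/-- `w ∈ ℓ∞(Γ,ℤ)`: all values are integers. -/
def IntValued (w : Γ → ℝ) : Prop := ∀ γ : Γ, ∃ k : ℤ, w γ = (k : ℝ)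

/-- For `f ∈ ℤΓ`, the operator `ρ_f` on `ℓ∞(Γ)`: `(ρ_f w)_γ = Σ_{γ'} w_{γγ'} f_{γ'}`. -/
def rhoInf (f : Γ →₀ ℤ) (w : Γ → ℝ) : Γ → ℝ :=
  fun γ => f.sum fun γ' c => (c : ℝ) * w (γ * γ')

/-- For `h ∈ ℓ¹(Γ)`, the operator `ρ_h` on `ℓ∞(Γ)`: `(ρ_h w)_γ = Σ_{γ'} w_{γγ'} h_{γ'}`. -/
def rhoL1 (h : Γ → ℝ) (w : Γ → ℝ) : Γ → ℝ :=
  fun γ => ∑' γ' : Γ, w (γ * γ') * h γ'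

/-- Convolution on `ℓ¹(Γ)`: `(g·h)_γ = Σ_{γ'} g_{γ'} h_{γ'⁻¹γ}`. -/
def conv (g h : Γ → ℝ) : Γ → ℝ := fun γ => ∑' γ' : Γ, g γ' * h (γ'⁻¹ * γ)

/-- Convolution on `ℓ¹(Γ,ℂ)`. -/
def convC (g h : Γ → ℂ) : Γ → ℂ := fun γ => ∑' γ' : Γ, g γ' * h (γ'⁻¹ * γ)

open Classical in
/-- The unit `δ₁` of the convolution algebra `ℓ¹(Γ)`. -/
def deltaOne : Γ → ℝ := fun γ => if γ = 1 then 1 else 0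

open Classical in
/-- The unit `δ₁` of `ℓ¹(Γ,ℂ)`. -/
def deltaOneC : Γ → ℂ := fun γ => if γ = 1 then 1 else 0

/-- `g` is a two-sided convolution inverse of `f` in `ℓ¹(Γ)`. -/
def IsL1Inverse (f g : Γ → ℝ) : Prop :=
  Summable g ∧ conv f g = deltaOne ∧ conv g f = deltaOne

/-- View `f ∈ ℤΓ` as an element of `ℓ¹(Γ)`. -/
def fR (f : Γ →₀ ℤ) : Γ → ℝ := fun γ => (f γ : ℝ)

/-- View `f ∈ ℤΓ` as an element of `ℓ¹(Γ,ℂ)`. -/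
def fCC (f : Γ →₀ ℤ) : Γ → ℂ := fun γ => (f γ : ℂ)

/-- The `ℓ¹`-norm `‖f‖₁` of `f ∈ ℤΓ`. -/
def finsuppL1 (f : Γ →₀ ℤ) : ℝ := f.sum fun _ c => |(c : ℝ)|

/-- The `ℓ¹`-norm of `h ∈ ℓ¹(Γ,ℂ)`. -/
def l1normC (h : Γ → ℂ) : ℝ := ∑' γ : Γ, ‖h γ‖

/-- Coordinatewise reduction mod 1, `η : ℓ∞(Γ) → 𝕋^Γ`. -/
def etaT (w : Γ → ℝ) : Γ → Torus := fun γ => ((w γ : ℝ) : Torus)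

/-- The map `ξ = η ∘ ρ_{w}` for `w ∈ ℓ¹(Γ)`. -/
def xiMap (w : Γ → ℝ) (v : Γ → ℝ) : Γ → Torus := etaT (rhoL1 w v)

/-- A point `x ∈ 𝕋^Γ` is homoclinic if `λ^γ x → 0` along the cofinite filter on `Γ`. -/
def IsHomoclinic (x : Γ → Torus) : Prop :=
  Filter.Tendsto (fun γ : Γ => lsh γ x) Filter.cofinite (nhds 0)

/-- The set of `Γ'`-fixed points of `α_f` in `X_f`. -/
def FixSet (f : Γ →₀ ℤ) (Γ' : Subgroup Γ) : Set (Γ → Torus) :=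
  {x | x ∈ XSet f ∧ ∀ γ ∈ Γ', lsh γ x = x}

/-- Left `(K,ε)`-invariance of a finite set `Q ⊆ Γ`. -/
def LeftInv [DecidableEq Γ] (K : Finset Γ) (ε : ℝ) (Q : Finset Γ) : Prop :=
  ∑ γ ∈ K, (((Q.image fun q => γ * q) ∆ Q).card : ℝ) / (Q.card : ℝ) < ε

/-- Right `(K,ε)`-invariance of a finite set `Q ⊆ Γ`. -/
def RightInv [DecidableEq Γ] (K : Finset Γ) (ε : ℝ) (Q : Finset Γ) : Prop :=
  ∑ γ ∈ K, (((Q.image fun q => q * γ) ∆ Q).card : ℝ) / (Q.card : ℝ) < ε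

/-- Amenability: existence of a left Følner sequence. -/
def Amenable (Γ : Type*) [Group Γ] [DecidableEq Γ] : Prop :=
  ∃ Q : ℕ → Finset Γ, (∀ n, (Q n).Nonempty) ∧
    ∀ (K : Finset Γ) (ε : ℝ), 0 < ε → ∃ N : ℕ, ∀ n ≥ N, LeftInv K ε (Q n)

/-- Residual finiteness: there is a sequence of finite-index normal subgroups with
trivial intersection. -/
def ResFinite (Γ : Type*) [Group Γ] : Prop :=
  ∃ N : ℕ → Subgroup Γ, (∀ n, (N n).Normal ∧ (N n).FiniteIndex) ∧
    ∀ γ : Γ, (∀ n, γ ∈ N n) → γ = 1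

/-- `Q` is a fundamental domain for the coset space `Γ/Γ'`:
`{γQ : γ ∈ Γ'}` is a partition of `Γ`. -/
def IsFundDomain (Γ' : Subgroup Γ) (Q : Finset Γ) : Prop :=
  ∀ x : Γ, ∃! p : Γ × Γ, p.1 ∈ Γ' ∧ p.2 ∈ Q ∧ p.1 * p.2 = x

/-- `lim_n Γ_n = {1}`: for every finite `K ⊆ Γ` eventually `Γ_n ∩ K⁻¹K = {1}`. -/
def LimTriv (N : ℕ → Subgroup Γ) : Prop :=
  ∀ K : Finset Γ, ∃ M : ℕ, ∀ n ≥ M, ∀ γ ∈ N n, (∃ a ∈ K, ∃ b ∈ K, γ = a⁻¹ * b) → γ = 1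

/-- The word ball `B_F(n)` of radius `n` with respect to a generating set `F`. -/
def BallF (F : Finset Γ) (n : ℕ) : Set Γ :=
  {γ | ∃ l : List Γ, l.length ≤ n ∧ (∀ a ∈ l, a ∈ F) ∧ l.prod = γ}

end GroupDefs

/-- The Hilbert space `ℓ²(Γ,ℂ)`. -/
abbrev H2 (Γ : Type*) : Type _ := lp (fun _ : Γ => ℂ) 2

section Hilbert

variable {Γ : Type*} [Group Γ]

open Classical in
/-- The standard basis vector `δ₁ ∈ ℓ²(Γ,ℂ)`. -/
def deltaL2 : H2 Γ := lp.single 2 (1 : Γ) (1 : ℂ)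

/-- `A` is the right-convolution operator `ρ_f` on `ℓ²(Γ,ℂ)`,
`(ρ_f w)_γ = Σ_{γ'} w_{γγ'} f_{γ'}`. -/
def IsRho (f : Γ → ℂ) (A : H2 Γ →L[ℂ] H2 Γ) : Prop :=
  ∀ (w : H2 Γ) (γ : Γ), (A w : Γ → ℂ) γ = ∑' γ' : Γ, (w : Γ → ℂ) (γ * γ') * f γ'

/-- The von Neumann trace of `log (A A*)`, i.e. `tr_{NΓ}(log (A A*)) = (log(AA*) δ₁)(1)`,
where `log` is given by the continuous functional calculus. -/
def trLogAAstar (A : H2 Γ →L[ℂ] H2 Γ) : ℝ :=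
  letI : ContinuousFunctionalCalculus ℝ (H2 Γ →L[ℂ] H2 Γ) IsSelfAdjoint :=
    IsSelfAdjoint.instContinuousFunctionalCalculus
  (((cfc Real.log (A * star A)) deltaL2 : Γ → ℂ) (1 : Γ)).re

/-- The Fuglede–Kadison determinant `det_{NΓ} A = exp(½ tr(log (A A*)))`. -/
def detFK (A : H2 Γ →L[ℂ] H2 Γ) : ℝ := Real.exp (2⁻¹ * trLogAAstar A)

open Classical in
/-- `f^{(n)} : Γ/Γ_n → ℂ`, integration along the fibres: `f^{(n)}(δ) = Σ_{γ ∈ δ} f_γ`. -/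
def fQuot (f : Γ → ℂ) (H : Subgroup Γ) : (Γ ⧸ H) → ℂ :=
  fun δ => ∑' γ : Γ, if (QuotientGroup.mk γ : Γ ⧸ H) = δ then f γ else 0

open Classical in
/-- The indicator of the identity coset in `ℓ²(Γ/Γ_n, ℂ)`. -/
def deltaQuot (H : Subgroup Γ) : (Γ ⧸ H) → ℂ :=
  fun δ => if δ = (QuotientGroup.mk (1 : Γ) : Γ ⧸ H) then 1 else 0

end Hilbert

/-!
Write `ρ_f w` for the right convolution `γ ↦ Σ_{γ'} w(γγ') f(γ')`; for summable `f` it maps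
summable functions to summable functions, and `(Q(ρ_f) δ₁)(1)` is a linear combination of the
values `(ρ_f^k δ₁)(1)`. Summing over the fibres of `Γ → Γ/Γ_n` intertwines `ρ_f` with
`ρ_{f^{(n)}}` (Fubini for absolutely summable families on `Γ × Γ`), so `ρ_{f^{(n)}}^k δ_{1̄}`
is the fibre sum of `ρ_f^k δ₁`, and its value at `1̄` is the sum of `ρ_f^k δ₁` over `Γ_n`.
Since `Γ_n` eventually misses every nontrivial element, dominated convergence for series
turns this into `(ρ_f^k δ₁)(1)` in the limit.
-/

open Filter Topology

section RightConvolution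

variable {G : Type*} [Group G]

def rhoC (f w : G → ℂ) : G → ℂ := fun γ => ∑' γ' : G, w (γ * γ') * f γ'

lemma summable_mul_comp_mul {w f : G → ℂ} (hw : Summable w) (hf : Summable f) :
    Summable (fun p : G × G => w (p.1 * p.2) * f p.2) := by
  have hprod : Summable (fun p : G × G => w p.1 * f p.2) :=
    summable_mul_of_summable_norm hw.norm hf.norm
  exact hprod.comp_injective (i := fun p : G × G => (p.1 * p.2, p.2))
    fun p q h => by
      obtain ⟨h₁, h₂⟩ := Prod.mk.inj h
      rw [h₂] at h₁
      exact Prod.ext (mul_right_cancel h₁) h₂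

lemma summable_rhoC {f w : G → ℂ} (hf : Summable f) (hw : Summable w) :
    Summable (rhoC f w) :=
  (summable_mul_comp_mul hw hf).prod

lemma summable_rhoC_iterate {f w : G → ℂ} (hf : Summable f) (hw : Summable w) (k : ℕ) :
    Summable ((rhoC f)^[k] w) := by
  induction k with
  | zero => exact hw
  | succ k ih => simpa only [Function.iterate_succ_apply'] using summable_rhoC hf ih

lemma summable_deltaOneC : Summable (deltaOneC : G → ℂ) := by
  classical
  exact (hasSum_ite_eq 1 1).summable

end RightConvolution

section Quotient

variable {G : Type*} [Group G] (H : Subgroup G)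

lemma fQuot_eq_tsum_fiber (w : G → ℂ) (δ : G ⧸ H) :
    fQuot w H δ = ∑' γ : QuotientGroup.mk ⁻¹' {δ}, w γ := by
  classical
  rw [tsum_subtype, fQuot]
  exact tsum_congr fun γ => by rw [Set.indicator_apply]; exact if_congr Iff.rfl rfl rfl

lemma norm_fQuot_le {w : G → ℂ} (hw : Summable w) (δ : G ⧸ H) :
    ‖fQuot w H δ‖ ≤ ∑' γ, ‖w γ‖ := by
  rw [fQuot_eq_tsum_fiber]
  exact (norm_tsum_le_tsum_norm (hw.norm.subtype _)).trans
    (Summable.tsum_subtype_le (‖w ·‖) _ (fun _ => norm_nonneg _) hw.norm)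

lemma tsum_mul_fQuot {φ : G ⧸ H → ℂ} {C : ℝ} (hφ : ∀ δ, ‖φ δ‖ ≤ C) {v : G → ℂ}
    (hv : Summable v) :
    ∑' δ, φ δ * fQuot v H δ = ∑' γ : G, φ γ * v γ := by
  have hsum : Summable (fun γ : G => φ γ * v γ) :=
    (hv.norm.mul_left C).of_norm_bounded fun γ => by
      rw [norm_mul]
      exact mul_le_mul_of_nonneg_right (hφ γ) (norm_nonneg _)
  rw [← (hsum.hasSum.tsum_fiberwise (QuotientGroup.mk : G → G ⧸ H)).tsum_eq]
  refine tsum_congr fun δ => ?_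
  rw [fQuot_eq_tsum_fiber, ← tsum_mul_left]
  refine tsum_congr fun γ => ?_
  rw [show (γ : G ⧸ H) = δ from γ.2]

lemma fQuot_comp_mul_right [H.Normal] (w : G → ℂ) (γ' : G) (δ : G ⧸ H) :
    fQuot (fun γ => w (γ * γ')) H δ = fQuot w H (δ * γ') := by
  classical
  rw [fQuot, fQuot,
    ← (Equiv.mulRight γ').tsum_eq (fun γ => if (γ : G ⧸ H) = δ * γ' then w γ else 0)]
  refine tsum_congr fun γ => ?_
  simp only [Equiv.coe_mulRight, QuotientGroup.mk_mul, mul_left_inj]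

lemma fQuot_rhoC [H.Normal] {f w : G → ℂ} (hf : Summable f) (hw : Summable w) :
    fQuot (rhoC f w) H = rhoC (fQuot f H) (fQuot w H) := by
  classical
  funext δ
  have hsum : Summable (Function.uncurry fun (γ γ' : G) =>
      if (γ : G ⧸ H) = δ then w (γ * γ') * f γ' else 0) :=
    (summable_mul_comp_mul hw hf).norm.of_norm_bounded fun p => by
      dsimp only [Function.uncurry]
      split_ifs
      · exact le_rfl
      · rw [norm_zero]
        exact norm_nonneg _
  calc fQuot (rhoC f w) H δ
      = ∑' (γ : G) (γ' : G), if (γ : G ⧸ H) = δ then w (γ * γ') * f γ' else 0 := by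
        refine tsum_congr fun γ => ?_
        split_ifs <;> simp [rhoC]
    _ = ∑' (γ' : G) (γ : G), if (γ : G ⧸ H) = δ then w (γ * γ') * f γ' else 0 :=
        hsum.tsum_comm.symm
    _ = ∑' γ' : G, fQuot w H (δ * γ') * f γ' := by
        refine tsum_congr fun γ' => ?_
        rw [← fQuot_comp_mul_right, fQuot, ← tsum_mul_right]
        refine tsum_congr fun γ => ?_
        split_ifs <;> simp
    _ = rhoC (fQuot f H) (fQuot w H) δ :=
        (tsum_mul_fQuot H (norm_fQuot_le H hw <| δ * ·) hf).symm

lemma fQuot_rhoC_iterate [H.Normal] {f w : G → ℂ} (hf : Summable f) (hw : Summable w)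
    (k : ℕ) : fQuot ((rhoC f)^[k] w) H = (rhoC (fQuot f H))^[k] (fQuot w H) := by
  induction k with
  | zero => rfl
  | succ k ih =>
    rw [Function.iterate_succ_apply', Function.iterate_succ_apply', ← ih,
      fQuot_rhoC H hf (summable_rhoC_iterate hf hw k)]

lemma fQuot_deltaOneC : fQuot deltaOneC H = deltaQuot H := by
  classical
  funext δ
  rw [fQuot, tsum_eq_single 1 fun γ hγ => by simp [deltaOneC, hγ]]
  simp only [deltaOneC, deltaQuot]
  exact if_congr eq_comm rfl rfl

lemma mk_eq_mk_one_iff {H : Subgroup G} {γ : G} :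
    (γ : G ⧸ H) = ((1 : G) : G ⧸ H) ↔ γ ∈ H := by
  rw [QuotientGroup.eq, mul_one, inv_mem_iff]

lemma LimTriv.eventually_notMem {N : ℕ → Subgroup G} (hN : LimTriv N) {γ : G} (hγ : γ ≠ 1) :
    ∀ᶠ n in atTop, γ ∉ N n := by
  classical
  obtain ⟨M, hM⟩ := hN {1, γ}
  filter_upwards [eventually_ge_atTop M] with n hn hmem
  exact hγ (hM n hn γ hmem ⟨1, by simp, γ, by simp, by simp⟩)

lemma tendsto_fQuot_apply_one {N : ℕ → Subgroup G} (hN : LimTriv N) {w : G → ℂ}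
    (hw : Summable w) :
    Tendsto (fun n => fQuot w (N n) ((1 : G) : G ⧸ N n)) atTop (𝓝 (w 1)) := by
  classical
  have key := tendsto_tsum_of_dominated_convergence (𝓕 := atTop)
    (f := fun n γ => if (γ : G ⧸ N n) = ((1 : G) : G ⧸ N n) then w γ else 0)
    (g := fun γ => if γ = 1 then w 1 else 0) hw.norm (fun γ => ?_)
    (Eventually.of_forall fun n γ => ?_)
  · rwa [tsum_ite_eq] at key
  · by_cases hγ : γ = 1
    · subst hγ
      simp
    · simp only [hγ, if_false, mk_eq_mk_one_iff]
      refine tendsto_const_nhds.congr' ?_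
      filter_upwards [hN.eventually_notMem hγ] with n hn
      simp [hn]
  · split_ifs <;> simp

end Quotient

section Operators

variable {Γ : Type*} [Group Γ] {f : Γ → ℂ} {A : H2 Γ →L[ℂ] H2 Γ}

lemma IsRho.coe_apply (hA : IsRho f A) (w : H2 Γ) : ⇑(A w) = rhoC f ⇑w :=
  funext (hA w)

lemma IsRho.coe_pow_apply (hA : IsRho f A) (w : H2 Γ) :
    ∀ k : ℕ, ⇑((A ^ k) w) = (rhoC f)^[k] ⇑w
  | 0 => rfl
  | k + 1 => by
    rw [pow_succ', show (A * A ^ k) w = A ((A ^ k) w) from rfl, hA.coe_apply,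
      hA.coe_pow_apply w k, Function.iterate_succ_apply']

lemma coe_deltaL2 : ⇑(deltaL2 : H2 Γ) = deltaOneC := by
  funext γ
  simp [deltaL2, deltaOneC, Pi.single_apply]

end Operators

theorem statement13_general {Γ : Type*} [Group Γ]
    (N : ℕ → Subgroup Γ) (hnorm : ∀ n, (N n).Normal)
    (hlim : LimTriv N) (f : Γ → ℂ) (hf : Summable f)
    (A : H2 Γ →L[ℂ] H2 Γ) (hA : IsRho f A)
    (B : ∀ n : ℕ, ((Γ ⧸ N n) → ℂ) →ₗ[ℂ] ((Γ ⧸ N n) → ℂ))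
    (hB : ∀ n : ℕ, haveI := hnorm n;
      ∀ (w : (Γ ⧸ N n) → ℂ) (δ : Γ ⧸ N n),
        B n w δ = ∑' δ' : Γ ⧸ N n, w (δ * δ') * fQuot f (N n) δ')
    (Q : Polynomial ℂ) :
    Filter.Tendsto
      (fun n : ℕ =>
        (Polynomial.aeval (B n) Q) (deltaQuot (N n)) (QuotientGroup.mk (1 : Γ)))
      Filter.atTop
      (nhds (((Polynomial.aeval A Q) deltaL2) (1 : Γ))) := by
  have hBpow : ∀ n k, (B n ^ k) (deltaQuot (N n)) =
      fQuot ((rhoC f)^[k] deltaOneC) (N n) := fun n k => by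
    have := hnorm n
    have hBn : ⇑(B n) = rhoC (fQuot f (N n)) := funext fun w => funext (hB n w)
    rw [Module.End.pow_apply, hBn, ← fQuot_deltaOneC,
      fQuot_rhoC_iterate (N n) hf summable_deltaOneC]
  induction Q using Polynomial.induction_on' with
  | add p q hp hq => simpa using hp.add hq
  | monomial k c =>
    have hApow : ⇑((A ^ k) deltaL2) = (rhoC f)^[k] deltaOneC := by
      rw [hA.coe_pow_apply, coe_deltaL2]
    simp only [Polynomial.aeval_monomial, Algebra.algebraMap_eq_smul_one, smul_mul_assoc,
      one_mul, LinearMap.smul_apply, smul_apply, Pi.smul_apply,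
      lp.coeFn_smul, smul_eq_mul, hBpow, hApow]
    exact (tendsto_fQuot_apply_one hlim
      (summable_rhoC_iterate hf summable_deltaOneC k)).const_mul c

/-- Let `Γ` be a countable residually finite discrete group and
`(Γ_n)` a sequence of finite-index normal subgroups with `lim Γ_n = {1}`. For every
`f ∈ ℓ¹(Γ,ℂ)` and every complex polynomial `Q`, the normalized traces converge:
`⟨Q(ρ_f) δ₁, δ₁⟩ = lim_n ⟨Q(ρ_{f⁽ⁿ⁾}) δ_{1̄}, δ_{1̄}⟩` (the trace of an operator `T`
being the value of `T δ₁` at the identity). -/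
theorem statement13 {Γ : Type*} [Group Γ] [Countable Γ] (hRF : ResFinite Γ)
    (N : ℕ → Subgroup Γ) (hnorm : ∀ n, (N n).Normal) (hfi : ∀ n, (N n).FiniteIndex)
    (hlim : LimTriv N) (f : Γ → ℂ) (hf : Summable f)
    (A : H2 Γ →L[ℂ] H2 Γ) (hA : IsRho f A)
    (B : ∀ n : ℕ, ((Γ ⧸ N n) → ℂ) →ₗ[ℂ] ((Γ ⧸ N n) → ℂ))
    (hB : ∀ n : ℕ, haveI := hnorm n;
      ∀ (w : (Γ ⧸ N n) → ℂ) (δ : Γ ⧸ N n),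
        B n w δ = ∑' δ' : Γ ⧸ N n, w (δ * δ') * fQuot f (N n) δ')
    (Q : Polynomial ℂ) :
    Filter.Tendsto
      (fun n : ℕ =>
        (Polynomial.aeval (B n) Q) (deltaQuot (N n)) (QuotientGroup.mk (1 : Γ)))
      Filter.atTop
      (nhds (((Polynomial.aeval A Q) deltaL2) (1 : Γ))) :=
  statement13_general N hnorm hlim f hf A hA B hB Q

end
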